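/- arXiv:1808.03590 — 3 statements merged into one kernel-verified Lean document; each statement's English description precedes it below -/
import Mathlib

section
/- Let H be a real Hilbert space and f : H → ℝ ∪ {+∞} a proper closed convex function. Then the set S = cl conv { (−f*(v), v) : v ∈ dom f* } is an affine support set of f (i.e., S is closed convex and f(x) = sup_{(a,v) ∈ S} (a + ⟨v, x⟩) for all x), and moreover S is contained in every affine support set of f. -/
/-!
Every `(-f* v, v)` with `v ∈ dom f*` is an affine minorant of `f` (Fenchel–Young), and these
minorants come arbitrarily close to `f` at every point: separating a point below the closed convex
epigraph from it gives such a minorant (Fenchel–Moreau), where a vertical separating hyperplane is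
first tilted by a large multiple of some affine minorant. Closure and convex hull do not change the
envelope, since `a + ⟪v, x⟫ ≤ f x` is a closed convex condition on `(a, v)`.

For minimality, separate a point `(-f* v, v) ∉ T` from `T` by `(a, w) ↦ λ a + ⟪z, w⟫`. If `λ > 0`,
the envelope of `T` at `z / λ` contradicts Fenchel–Young. Otherwise add `t (a + ⟪w, x⟫)` with
`t > -λ`, where `x` nearly attains the supremum defining `f* v`, so that the separation survives.
-/

open scoped RealInnerProductSpace

lemma EReal.coe_sub_le_coe_iff {a b : ℝ} {y : EReal} :
    (a : EReal) - y ≤ b ↔ ∀ s : ℝ, y ≤ s → a - b ≤ s := by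
  induction y with
  | bot => simpa using ⟨a - b - 1, by linarith⟩
  | coe y =>
    rw [← EReal.coe_sub, EReal.coe_le_coe_iff]
    exact ⟨fun h s hs => by linarith [EReal.coe_le_coe_iff.1 hs], fun h => by linarith [h y le_rfl]⟩
  | top => simp

noncomputable section

def epigraph {E : Type*} (f : E → EReal) : Set (E × ℝ) := {p | f p.1 ≤ p.2}

theorem isClosed_epigraph {E : Type*} [TopologicalSpace E] {f : E → EReal}
    (hf : LowerSemicontinuous f) : IsClosed (epigraph f) :=
  hf.isClosed_epigraph.preimage
    (continuous_fst.prodMk (continuous_coe_real_ereal.comp continuous_snd))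

variable {H : Type*} [NormedAddCommGroup H] [InnerProductSpace ℝ H]

def fenchelConj (f : H → EReal) (v : H) : EReal := ⨆ x, ((⟪v, x⟫ : ℝ) : EReal) - f x

def conjGraph (f : H → EReal) : Set (ℝ × H) :=
  {p | fenchelConj f p.2 ≠ ⊤ ∧ p.1 = -(fenchelConj f p.2).toReal}

def affineSup (T : Set (ℝ × H)) (x : H) : EReal := ⨆ p ∈ T, ((p.1 + ⟪p.2, x⟫ : ℝ) : EReal)

theorem le_affineSup {T : Set (ℝ × H)} {p : ℝ × H} (hp : p ∈ T) (x : H) :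
    ((p.1 + ⟪p.2, x⟫ : ℝ) : EReal) ≤ affineSup T x :=
  le_iSup₂ (f := fun (p : ℝ × H) (_ : p ∈ T) => ((p.1 + ⟪p.2, x⟫ : ℝ) : EReal)) p hp

variable {f : H → EReal}

theorem fenchelConj_le_iff {v : H} {b : ℝ} :
    fenchelConj f v ≤ b ↔ ∀ p ∈ epigraph f, ⟪v, p.1⟫ - b ≤ p.2 := by
  simp only [fenchelConj, iSup_le_iff, EReal.coe_sub_le_coe_iff, epigraph, Set.mem_ofPred_eq,
    Prod.forall]

theorem lt_fenchelConj_iff {v : H} {c : ℝ} :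
    (c : EReal) < fenchelConj f v ↔ ∃ p ∈ epigraph f, c < ⟪v, p.1⟫ - p.2 := by
  rw [← not_iff_not, not_lt, fenchelConj_le_iff]
  simp only [not_exists, not_and, not_lt, sub_le_comm]

theorem coe_inner_sub_le_fenchelConj (v : H) {x : H} {s : ℝ} (hs : f x ≤ s) :
    ((⟪v, x⟫ - s : ℝ) : EReal) ≤ fenchelConj f v :=
  le_iSup_of_le x (by rw [EReal.coe_sub]; exact EReal.sub_le_sub le_rfl hs)

theorem fenchelConj_ne_bot {x : H} (hx : f x ≠ ⊤) (v : H) : fenchelConj f v ≠ ⊥ :=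
  ne_bot_of_le_ne_bot (EReal.coe_ne_bot _)
    (coe_inner_sub_le_fenchelConj v (EReal.le_coe_toReal hx))

theorem inner_sub_le_toReal_fenchelConj {v x : H} {s : ℝ} (hv : fenchelConj f v ≠ ⊤)
    (hs : f x ≤ s) : ⟪v, x⟫ - s ≤ (fenchelConj f v).toReal := by
  have h := EReal.toReal_le_toReal (coe_inner_sub_le_fenchelConj v hs) (EReal.coe_ne_bot _) hv
  rwa [EReal.toReal_coe] at h

theorem forall_mem_closure_convexHull_le {G : Set (ℝ × H)} {x : H} {y : ℝ}
    (h : ∀ p ∈ G, p.1 + ⟪p.2, x⟫ ≤ y) : ∀ p ∈ closure (convexHull ℝ G), p.1 + ⟪p.2, x⟫ ≤ y := by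
  let L : ℝ × H →L[ℝ] ℝ := .fst ℝ ℝ H + (innerSL ℝ x).comp (.snd ℝ ℝ H)
  have hL : ∀ p : ℝ × H, L p = p.1 + ⟪p.2, x⟫ := fun p => by simp [L, real_inner_comm]
  simp only [← hL] at h ⊢
  exact closure_minimal (convexHull_min h (convex_halfSpace_le L.toLinearMap.isLinear y))
    (isClosed_le L.continuous continuous_const)

theorem affineSup_closure_convexHull_conjGraph_le (x : H) :
    affineSup (closure (convexHull ℝ (conjGraph f))) x ≤ f x := by
  refine EReal.le_of_forall_lt_iff_le.1 fun s hs => iSup₂_le fun p hp => EReal.coe_le_coe_iff.2 ?_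
  refine forall_mem_closure_convexHull_le (fun q hq => ?_) p hp
  rw [hq.2]
  linarith [inner_sub_le_toReal_fenchelConj hq.1 hs.le]

theorem exists_inner_fst_add_mul_snd [CompleteSpace H] (φ : H × ℝ →L[ℝ] ℝ) :
    ∃ (z : H) (c : ℝ), ∀ p : H × ℝ, φ p = ⟪z, p.1⟫ + c * p.2 := by
  refine ⟨(InnerProductSpace.toDual ℝ H).symm (φ.comp (.inl ℝ H ℝ)), φ (0, 1), fun p => ?_⟩
  rw [← φ.comp_inl_add_comp_inr, InnerProductSpace.toDual_symm_apply]
  congr 1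
  simpa [mul_comm] using φ.map_smul p.2 (0, 1)

theorem exists_mul_fst_add_inner_snd [CompleteSpace H] (φ : ℝ × H →L[ℝ] ℝ) :
    ∃ (c : ℝ) (z : H), ∀ p : ℝ × H, φ p = c * p.1 + ⟪z, p.2⟫ := by
  refine ⟨φ (1, 0), (InnerProductSpace.toDual ℝ H).symm (φ.comp (.inr ℝ ℝ H)), fun p => ?_⟩
  rw [← φ.comp_inl_add_comp_inr, InnerProductSpace.toDual_symm_apply]
  congr 1
  simpa [mul_comm] using φ.map_smul p.1 (1, 0)

theorem exists_separation_of_notMem_epigraph [CompleteSpace H] (hclosed : IsClosed (epigraph f))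
    (hconv : Convex ℝ (epigraph f)) {x₁ : H} (hx₁ : f x₁ ≠ ⊤) {q : H × ℝ} (hq : q ∉ epigraph f) :
    ∃ (z : H) (c u : ℝ), c ≤ 0 ∧ (∀ p ∈ epigraph f, ⟪z, p.1⟫ + c * p.2 < u) ∧
      u < ⟪z, q.1⟫ + c * q.2 := by
  obtain ⟨φ, u, hφ, hφq⟩ := geometric_hahn_banach_closed_point hconv hclosed hq
  obtain ⟨z, c, hzc⟩ := exists_inner_fst_add_mul_snd φ
  refine ⟨z, c, u, not_lt.1 fun hc => ?_, fun p hp => hzc p ▸ hφ p hp, hzc q ▸ hφq⟩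
  set s := max (f x₁).toReal ((u - ⟪z, x₁⟫) / c)
  have hs : (x₁, s) ∈ epigraph f := (EReal.le_coe_toReal hx₁).trans (by simp [s])
  have hcs : u - ⟪z, x₁⟫ ≤ c * s :=
    (div_le_iff₀' hc).1 (le_max_right _ _)
  linarith [hzc _ ▸ hφ _ hs]

theorem fenchelConj_le_of_forall_mem_epigraph_lt {z : H} {c u : ℝ} (hc : c < 0)
    (h : ∀ p ∈ epigraph f, ⟪z, p.1⟫ + c * p.2 < u) : fenchelConj f ((-c)⁻¹ • z) ≤ (u / -c : ℝ) := by
  rw [fenchelConj_le_iff]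
  intro p hp
  rw [real_inner_smul_left, inv_mul_eq_div, div_sub_div_same, div_le_iff₀ (neg_pos.2 hc)]
  linarith [h p hp]

theorem fenchelConj_add_smul_le {v₀ z : H} {b₀ u t : ℝ} (h₀ : fenchelConj f v₀ ≤ b₀)
    (hz : ∀ p ∈ epigraph f, ⟪z, p.1⟫ ≤ u) (ht : 0 ≤ t) :
    fenchelConj f (v₀ + t • z) ≤ (b₀ + t * u : ℝ) := by
  rw [fenchelConj_le_iff] at h₀ ⊢
  intro p hp
  rw [inner_add_left, real_inner_smul_left]
  linarith [h₀ p hp, mul_le_mul_of_nonneg_left (hz p hp) ht]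

theorem mul_neg_toReal_fenchelConj_add_inner_le {T : Set (ℝ × H)}
    (hT : ∀ x, f x = affineSup T x) {v y : H} {μ β : ℝ} (hv : fenchelConj f v ≠ ⊤) (hμ : 0 < μ)
    (hβ : ∀ p ∈ T, μ * p.1 + ⟪y, p.2⟫ ≤ β) : μ * -(fenchelConj f v).toReal + ⟪y, v⟫ ≤ β := by
  have hf : f (μ⁻¹ • y) ≤ (μ⁻¹ * β : ℝ) := by
    rw [hT]
    refine iSup₂_le fun p hp => EReal.coe_le_coe_iff.2 ?_
    have h := mul_le_mul_of_nonneg_left (hβ p hp) (inv_nonneg.2 hμ.le)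
    rwa [mul_add, inv_mul_cancel_left₀ hμ.ne', ← real_inner_smul_left, real_inner_comm] at h
  have h := inner_sub_le_toReal_fenchelConj hv hf
  rw [real_inner_smul_right, real_inner_comm, ← mul_sub, inv_mul_le_iff₀ hμ] at h
  linarith

variable [CompleteSpace H] {x₁ : H} {y₁ : ℝ}

theorem exists_fenchelConj_le (hclosed : IsClosed (epigraph f)) (hconv : Convex ℝ (epigraph f))
    (h₁ : f x₁ = y₁) : ∃ (v : H) (b : ℝ), fenchelConj f v ≤ b := by
  have hq : (x₁, y₁ - 1) ∉ epigraph f := by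
    simp only [epigraph, Set.mem_ofPred_eq, h₁, EReal.coe_le_coe_iff, not_le]
    linarith
  obtain ⟨z, c, u, -, hlt, hgt⟩ :=
    exists_separation_of_notMem_epigraph hclosed hconv (h₁ ▸ EReal.coe_ne_top y₁) hq
  have hc : c < 0 := by
    linarith [hlt (x₁, y₁) (by simp [epigraph, h₁])]
  exact ⟨_, _, fenchelConj_le_of_forall_mem_epigraph_lt hc hlt⟩

theorem exists_fenchelConj_le_of_lt (hclosed : IsClosed (epigraph f))
    (hconv : Convex ℝ (epigraph f)) (h₁ : f x₁ = y₁) {x₀ : H} {r : ℝ} (hr : (r : EReal) < f x₀) :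
    ∃ (v : H) (b : ℝ), fenchelConj f v ≤ b ∧ r < ⟪v, x₀⟫ - b := by
  have hq : (x₀, r) ∉ epigraph f := not_le.2 hr
  obtain ⟨z, c, u, hc, hlt, hgt⟩ :=
    exists_separation_of_notMem_epigraph hclosed hconv (h₁ ▸ EReal.coe_ne_top y₁) hq
  rcases hc.lt_or_eq with hc | rfl
  · refine ⟨_, _, fenchelConj_le_of_forall_mem_epigraph_lt hc hlt, ?_⟩
    rw [real_inner_smul_left, inv_mul_eq_div, div_sub_div_same, lt_div_iff₀ (neg_pos.2 hc)]
    dsimp only at hgt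
    linarith
  · obtain ⟨v₀, b₀, h₀⟩ := exists_fenchelConj_le hclosed hconv h₁
    simp only [zero_mul, add_zero] at hlt hgt
    obtain ⟨n, hn⟩ := exists_nat_gt ((r - (⟪v₀, x₀⟫ - b₀)) / (⟪z, x₀⟫ - u))
    rw [div_lt_iff₀ (sub_pos.2 hgt)] at hn
    refine ⟨_, _, fenchelConj_add_smul_le h₀ (fun p hp => (hlt p hp).le) n.cast_nonneg, ?_⟩
    rw [inner_add_left, real_inner_smul_left]
    linarith

theorem affineSup_closure_convexHull_conjGraph (hf : LowerSemicontinuous f)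
    (hconv : Convex ℝ (epigraph f)) (h₁ : f x₁ = y₁) (x : H) :
    affineSup (closure (convexHull ℝ (conjGraph f))) x = f x := by
  refine le_antisymm (affineSup_closure_convexHull_conjGraph_le x)
    (EReal.ge_of_forall_gt_iff_ge.1 fun r hr => ?_)
  obtain ⟨v, b, hvb, hrv⟩ := exists_fenchelConj_le_of_lt (isClosed_epigraph hf) hconv h₁ hr
  have hv : fenchelConj f v ≠ ⊤ := ne_top_of_le_ne_top (EReal.coe_ne_top b) hvb
  have hb : (fenchelConj f v).toReal ≤ b := by
    simpa using EReal.toReal_le_toReal hvb (fenchelConj_ne_bot (h₁ ▸ EReal.coe_ne_top y₁) v)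
      (EReal.coe_ne_top b)
  have hmem : (-(fenchelConj f v).toReal, v) ∈ closure (convexHull ℝ (conjGraph f)) :=
    subset_closure (subset_convexHull ℝ _ ⟨hv, rfl⟩)
  exact (EReal.coe_le_coe_iff.2 (by dsimp only; linarith)).trans (le_affineSup hmem x)

theorem conjGraph_subset {T : Set (ℝ × H)} (hTc : IsClosed T) (hTconv : Convex ℝ T)
    (hT : ∀ x, f x = affineSup T x) (hx₁ : f x₁ ≠ ⊤) : conjGraph f ⊆ T := by
  rintro ⟨a, v⟩ ⟨hv, ha⟩
  dsimp only at hv ha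
  subst ha
  set c := (fenchelConj f v).toReal with hc
  by_contra hq
  obtain ⟨φ, u, hφT, hφq⟩ := geometric_hahn_banach_closed_point hTconv hTc hq
  obtain ⟨lam, z, hφ⟩ := exists_mul_fst_add_inner_snd φ
  rw [hφ] at hφq
  set g := lam * -c + ⟪z, v⟫ - u
  have hg : 0 < g := sub_pos.2 hφq
  set t := |lam| + 1
  have ht : 0 < t := by positivity
  have hμ : 0 < lam + t := by linarith [neg_abs_le lam]
  have hcg : ((c - g / t : ℝ) : EReal) < fenchelConj f v := by
    refine lt_of_lt_of_eq ?_ (EReal.coe_toReal hv (fenchelConj_ne_bot hx₁ v))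
    exact EReal.coe_lt_coe_iff.2 (by linarith [div_pos hg ht])
  obtain ⟨⟨x, s⟩, hxs, hgap⟩ := lt_fenchelConj_iff.1 hcg
  dsimp only at hgap
  have hTx : ∀ p ∈ T, p.1 + ⟪p.2, x⟫ ≤ s := fun p hp =>
    EReal.coe_le_coe_iff.1 ((le_affineSup hp x).trans ((hT x).ge.trans hxs))
  have hsep := mul_neg_toReal_fenchelConj_add_inner_le hT hv hμ (y := z + t • x) (β := u + t * s)
    fun p hp => by
      rw [inner_add_left, real_inner_smul_left, real_inner_comm p.2 x]
      linarith [hφ p ▸ hφT p hp, mul_le_mul_of_nonneg_left (hTx p hp) ht.le]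
  rw [inner_add_left, real_inner_smul_left, real_inner_comm v x] at hsep
  have hts : t * (c - ⟪v, x⟫ + s) < g := by
    rw [← lt_div_iff₀' ht]
    linarith
  linarith

end

/-- cl conv { (−f*(v), v) : v ∈ dom f* } is the smallest affine support
set of a proper closed convex function f. -/
theorem smallest_affine_support_set
    {H : Type*} [NormedAddCommGroup H] [InnerProductSpace ℝ H] [CompleteSpace H]
    (f : H → EReal)
    (hproper_top : ∃ x, f x ≠ ⊤) (hproper_bot : ∀ x, f x ≠ ⊥)
    (hlsc : LowerSemicontinuous f)
    (hconv : Convex ℝ {p : H × ℝ | f p.1 ≤ (p.2 : EReal)})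
    (fconj : H → EReal)
    (hfconj : ∀ v, fconj v = ⨆ x, (((inner ℝ v x : ℝ) : EReal) - f x))
    (S : Set (ℝ × H))
    (hS : S = closure (convexHull ℝ
      {p : ℝ × H | fconj p.2 ≠ ⊤ ∧ p.1 = -(fconj p.2).toReal})) :
    IsClosed S ∧ Convex ℝ S
      ∧ (∀ x, f x = ⨆ p ∈ S, ((p.1 + inner ℝ p.2 x : ℝ) : EReal))
      ∧ ∀ T : Set (ℝ × H), IsClosed T → Convex ℝ T →
          (∀ x, f x = ⨆ p ∈ T, ((p.1 + inner ℝ p.2 x : ℝ) : EReal)) → S ⊆ T := by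
  obtain ⟨x₁, hx₁⟩ := hproper_top
  obtain rfl : fconj = fenchelConj f := funext hfconj
  subst hS
  refine ⟨isClosed_closure, (convex_convexHull ℝ _).closure, fun x => ?_, fun T hTc hTconv hT => ?_⟩
  · exact (affineSup_closure_convexHull_conjGraph hlsc hconv
      (EReal.coe_toReal hx₁ (hproper_bot x₁)).symm x).symm
  · exact closure_minimal (convexHull_min (conjGraph_subset hTc hTconv hT hx₁) hTconv) hTc
end

section
/- Let H be a real Hilbert space, f = f₁ − f₂ : H → ℝ a DC function with global codifferential [d̲f(x*), d̄f(x*)] at a point x* ∈ H, and C ⊆ d̄f(x*) a nonempty set with d̄f(x*) = cl conv C. Then x* is a global minimizer of f if and only if for every z ∈ C there exists ξ(z) ≥ 0 such that (ξ(z), 0) ∈ d̲f(x*) + z. -/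
/-!
For `z = (-b + f₂ x* - ⟪w, x*⟫, -w) ∈ d̄f(x*)` with `(b, w) ∈ S₂`, the condition
`(ξ, 0) ∈ d̲f(x*) + z` with `ξ ≥ 0` says that `S₁` contains a point `(a, w)` with
`a ≥ b + f₁ x* - f₂ x*`. If `x*` is a global minimizer, `b + f₁ x* - f₂ x* + ⟪w, ·⟫` is an affine
minorant of `f₁`, and a closed convex support set contains such a point for every affine minorant:
otherwise a functional `(a, v) ↦ a r + ⟪y, v⟫` separating `(c, w)` from `S₁ - ℝ≥0 × {0}` has
`r ≥ 0`, can be tilted to `r > 0`, and then contradicts `f₁ = sup S₁` at the point `r⁻¹ y`.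
Conversely, the condition places every `z ∈ C` in the closed half-space
`{z | f₁ x* - f₁ x ≤ z.1 + ⟪z.2, x - x*⟫}`, which therefore contains `cl conv C = d̄f(x*)`; by the
representation of `f₂` this says `f₂ x - f₂ x* ≤ f₁ x - f₁ x*`.
-/

open Set
open scoped RealInnerProductSpace

theorem isLUB_image_of_coe_eq_biSup {ι : Type*} {s : Set ι} {g : ι → ℝ} {a : ℝ}
    (h : (a : EReal) = ⨆ i ∈ s, (g i : EReal)) : IsLUB (g '' s) a := by
  refine ⟨?_, fun M hM => ?_⟩
  · rintro _ ⟨i, hi, rfl⟩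
    exact EReal.coe_le_coe_iff.1 (h ▸ le_iSup₂ (f := fun i _ => (g i : EReal)) i hi)
  · exact EReal.coe_le_coe_iff.1 (h ▸ iSup₂_le fun i hi => EReal.coe_le_coe_iff.2 (hM ⟨i, hi, rfl⟩))

section LowerClosureFst

variable {E : Type*} {S : Set (ℝ × E)}

def lowerClosureFst (S : Set (ℝ × E)) : Set (ℝ × E) :=
  {q | ∃ b, q.1 ≤ b ∧ (b, q.2) ∈ S}

theorem subset_lowerClosureFst : S ⊆ lowerClosureFst S :=
  fun p hp => ⟨p.1, le_rfl, hp⟩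

theorem convex_lowerClosureFst [AddCommGroup E] [Module ℝ E] (hS : Convex ℝ S) :
    Convex ℝ (lowerClosureFst S) := by
  rintro ⟨a₁, v₁⟩ ⟨b₁, hab₁, hb₁⟩ ⟨a₂, v₂⟩ ⟨b₂, hab₂, hb₂⟩ s t hs ht hst
  refine ⟨s * b₁ + t * b₂, ?_, by simpa using hS hb₁ hb₂ hs ht hst⟩
  simp only [Prod.fst_add, Prod.smul_fst, smul_eq_mul]
  gcongr

/-- Near a point `q₀`, the set is the projection of a closed subset of `Icc (q₀.1 - 1) B × (ℝ × E)`,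
and projections along a compact factor are closed maps. -/
theorem isClosed_lowerClosureFst [TopologicalSpace E] {B : ℝ} (hS : IsClosed S)
    (hB : ∀ p ∈ S, p.1 ≤ B) : IsClosed (lowerClosureFst S) := by
  refine isClosed_of_closure_subset fun q₀ hq₀ => ?_
  set T : Set (Icc (q₀.1 - 1) B × (ℝ × E)) :=
    {z | z.2.1 ≤ z.1} ∩ (fun z => ((z.1 : ℝ), z.2.2)) ⁻¹' S
  have hT : IsClosed T :=
    (isClosed_le (by fun_prop) (by fun_prop)).inter (hS.preimage (by fun_prop))
  have hTS : Prod.snd '' T ⊆ lowerClosureFst S := by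
    rintro _ ⟨z, ⟨hz, hzS⟩, rfl⟩
    exact ⟨z.1, hz, hzS⟩
  have hST : {q : ℝ × E | q₀.1 - 1 < q.1} ∩ lowerClosureFst S ⊆ Prod.snd '' T := by
    rintro q ⟨hq, b, hqb, hbS⟩
    have : q₀.1 - 1 < q.1 := hq
    exact ⟨(⟨b, by linarith, hB _ hbS⟩, q), ⟨hqb, hbS⟩, rfl⟩
  have hopen : IsOpen {q : ℝ × E | q₀.1 - 1 < q.1} := isOpen_lt continuous_const continuous_fst
  have hmem := hopen.inter_closure ⟨show q₀.1 - 1 < q₀.1 by linarith, hq₀⟩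
  exact hTS ((isClosedMap_snd_of_compactSpace T hT).closure_subset (closure_mono hST hmem))

end LowerClosureFst

theorem ContinuousLinearMap.le_of_mem_closure_convexHull {E : Type*} [AddCommGroup E]
    [Module ℝ E] [TopologicalSpace E] (L : E →L[ℝ] ℝ) {C : Set E} {r : ℝ}
    (h : ∀ z ∈ C, r ≤ L z) {z : E} (hz : z ∈ closure (convexHull ℝ C)) : r ≤ L z :=
  closure_minimal (convexHull_min h (convex_halfSpace_ge L.isLinear r))
    (isClosed_le continuous_const L.continuous) hz

section InnerProductSpace

variable {H : Type*} [NormedAddCommGroup H] [InnerProductSpace ℝ H]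

noncomputable def evalAffine (x : H) : ℝ × H →L[ℝ] ℝ :=
  .fst ℝ ℝ H + (innerSL ℝ x).comp (.snd ℝ ℝ H)

@[simp]
theorem evalAffine_apply (x : H) (p : ℝ × H) : evalAffine x p = p.1 + ⟪p.2, x⟫ := by
  simp [evalAffine, real_inner_comm x]

theorem ContinuousLinearMap.exists_apply_prod_eq_mul_add_inner [CompleteSpace H]
    (φ : ℝ × H →L[ℝ] ℝ) : ∃ (r : ℝ) (y : H), ∀ a v, φ (a, v) = a * r + ⟪y, v⟫ := by
  refine ⟨φ (1, 0), (InnerProductSpace.toDual ℝ H).symm (φ.comp (.inr ℝ ℝ H)), fun a v => ?_⟩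
  rw [InnerProductSpace.toDual_symm_apply, ← φ.comp_inl_add_comp_inr (a, v)]
  have : φ (a, 0) = a * φ (1, 0) := by simpa using φ.map_smul a ((1 : ℝ), (0 : H))
  simpa using this

section AffineSupport

variable {S : Set (ℝ × H)} {f : H → ℝ}

theorem mul_add_inner_le_of_affine_minorant
    (hf : ∀ x, IsLUB ((fun p : ℝ × H => p.1 + ⟪p.2, x⟫) '' S) (f x))
    {c : ℝ} {w : H} (hmin : ∀ x, c + ⟪w, x⟫ ≤ f x) {r u : ℝ} (hr : 0 < r) {y : H}
    (hu : ∀ p ∈ S, p.1 * r + ⟪y, p.2⟫ ≤ u) : c * r + ⟪y, w⟫ ≤ u := by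
  have hinner (v : H) : ⟪v, r⁻¹ • y⟫ * r = ⟪y, v⟫ := by
    rw [real_inner_smul_right, real_inner_comm]
    field_simp
  have hfx : f (r⁻¹ • y) * r ≤ u := by
    rw [← le_div_iff₀ hr]
    refine (hf _).2 ?_
    rintro _ ⟨p, hp, rfl⟩
    rw [le_div_iff₀ hr, add_mul, hinner]
    exact hu p hp
  have := mul_le_mul_of_nonneg_right (hmin (r⁻¹ • y)) hr.le
  rw [add_mul, hinner] at this
  linarith

theorem exists_mem_ge_of_affine_minorant [CompleteSpace H] (hSc : IsClosed S) (hSv : Convex ℝ S)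
    (hf : ∀ x, IsLUB ((fun p : ℝ × H => p.1 + ⟪p.2, x⟫) '' S) (f x))
    {c : ℝ} {w : H} (hmin : ∀ x, c + ⟪w, x⟫ ≤ f x) : ∃ a, c ≤ a ∧ (a, w) ∈ S := by
  have hB : ∀ p ∈ S, p.1 ≤ f 0 := fun p hp => by simpa using (hf 0).1 ⟨p, hp, rfl⟩
  have hc : c ≤ f 0 := by simpa using hmin 0
  obtain ⟨_, ⟨a₀, v₀⟩, hp₀, -⟩ := (hf 0).nonempty
  by_contra! hcw
  obtain ⟨φ, u, hφu, huφ⟩ := geometric_hahn_banach_closed_point (convex_lowerClosureFst hSv)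
    (isClosed_lowerClosureFst hSc hB)
    (show (c, w) ∉ lowerClosureFst S from fun ⟨b, hcb, hb⟩ => hcw b hcb hb)
  obtain ⟨r, y, hφ⟩ := φ.exists_apply_prod_eq_mul_add_inner
  have hray (t : ℝ) (ht : 0 ≤ t) : (a₀ - t) * r + ⟪y, v₀⟫ < u :=
    hφ _ _ ▸ hφu (a₀ - t, v₀) ⟨a₀, by linarith, hp₀⟩
  have hr : 0 ≤ r := by
    by_contra! hr
    have h₀ := hray 0 le_rfl
    rw [sub_zero] at h₀
    have ht : (u - a₀ * r - ⟪y, v₀⟫) / -r * r = -(u - a₀ * r - ⟪y, v₀⟫) := by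
      rw [div_neg, neg_mul, div_mul_cancel₀ _ hr.ne]
    have := hray ((u - a₀ * r - ⟪y, v₀⟫) / -r) (div_nonneg (by linarith) (by linarith))
    rw [sub_mul, ht] at this
    linarith
  rw [hφ] at huφ
  -- tilting the separating functional by `ε` in the intercept direction keeps it separating
  set ε := (c * r + ⟪y, w⟫ - u) / (f 0 - c + 1)
  have hε : 0 < ε := div_pos (by linarith) (by linarith)
  have hεc : ε * (f 0 - c + 1) = c * r + ⟪y, w⟫ - u := div_mul_cancel₀ _ (by linarith)
  have := mul_add_inner_le_of_affine_minorant hf hmin (add_pos_of_nonneg_of_pos hr hε)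
    (u := u + ε * f 0) fun p hp => by
      have := hφu p (subset_lowerClosureFst hp)
      rw [show p = (p.1, p.2) from rfl, hφ] at this
      nlinarith [hB p hp]
  nlinarith

end AffineSupport

end InnerProductSpace

theorem global_optimality_via_codifferential_alternative_general
    {H : Type*} [NormedAddCommGroup H] [InnerProductSpace ℝ H] [CompleteSpace H]
    (f₁ f₂ : H → ℝ) (S₁ S₂ : Set (ℝ × H))
    (hSclosed₁ : IsClosed S₁) (hSconv₁ : Convex ℝ S₁)
    (hrep₁ : ∀ x, ((f₁ x : ℝ) : EReal) = ⨆ p ∈ S₁, ((p.1 + inner ℝ p.2 x : ℝ) : EReal))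
    (hrep₂ : ∀ x, ((f₂ x : ℝ) : EReal) = ⨆ p ∈ S₂, ((p.1 + inner ℝ p.2 x : ℝ) : EReal))
    (xs : H) (dl du : Set (ℝ × H))
    (hdl : dl = {q : ℝ × H | ∃ p ∈ S₁, q = (p.1 - f₁ xs + inner ℝ p.2 xs, p.2)})
    (hdu : du = {q : ℝ × H | ∃ p ∈ S₂, q = (-p.1 + f₂ xs - inner ℝ p.2 xs, -p.2)})
    (C : Set (ℝ × H)) (hC : C ⊆ du)
    (hCgen : du = closure (convexHull ℝ C)) :
    (∀ x, f₁ xs - f₂ xs ≤ f₁ x - f₂ x)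
      ↔ ∀ z ∈ C, ∃ ξ : ℝ, 0 ≤ ξ ∧ ∃ p ∈ dl, p + z = ((ξ, (0 : H)) : ℝ × H) := by
  have hf₁ := fun x => isLUB_image_of_coe_eq_biSup (hrep₁ x)
  have hf₂ := fun x => isLUB_image_of_coe_eq_biSup (hrep₂ x)
  subst hdl
  constructor
  · intro hglob z hz
    obtain ⟨⟨b, w⟩, hbw, rfl⟩ := hdu ▸ hC hz
    have hminor (x : H) : b + f₁ xs - f₂ xs + ⟪w, x⟫ ≤ f₁ x := by
      linarith [(hf₂ x).1 ⟨(b, w), hbw, rfl⟩, hglob x]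
    obtain ⟨a, hle, ha⟩ := exists_mem_ge_of_affine_minorant hSclosed₁ hSconv₁ hf₁ hminor
    refine ⟨a - (b + f₁ xs - f₂ xs), by linarith, _, ⟨(a, w), ha, rfl⟩, ?_⟩
    exact Prod.ext (by simp only [Prod.fst_add]; ring) (by simp)
  · intro hcond x
    have hCL : ∀ z ∈ C, f₁ xs - f₁ x ≤ evalAffine (x - xs) z := by
      intro z hz
      obtain ⟨ξ, hξ, _, ⟨⟨a, v⟩, hav, rfl⟩, hsum⟩ := hcond z hz
      obtain ⟨hξeq, hv⟩ := Prod.ext_iff.1 hsum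
      simp only [Prod.fst_add, Prod.snd_add] at hξeq hv
      rw [evalAffine_apply, ← neg_eq_of_add_eq_zero_right hv, inner_neg_left, inner_sub_right]
      linarith [(hf₁ x).1 ⟨(a, v), hav, rfl⟩]
    have hf₂x : f₂ x ≤ f₂ xs + (f₁ x - f₁ xs) := (hf₂ x).2 <| by
      rintro _ ⟨⟨b, w⟩, hbw, rfl⟩
      have := (evalAffine (x - xs)).le_of_mem_closure_convexHull hCL
        (by rw [← hCgen, hdu]; exact ⟨(b, w), hbw, rfl⟩)
      simp only [evalAffine_apply, inner_neg_left, inner_sub_right] at this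
      show b + ⟪w, x⟫ ≤ _
      linarith
    linarith

/-- x* is a global minimizer of the DC function f = f₁ − f₂ iff for every
z ∈ C there is ξ(z) ≥ 0 with (ξ(z), 0) ∈ d̲f(x*) + z. -/
theorem global_optimality_via_codifferential_alternative
    {H : Type*} [NormedAddCommGroup H] [InnerProductSpace ℝ H] [CompleteSpace H]
    (f₁ f₂ : H → ℝ) (S₁ S₂ : Set (ℝ × H))
    (hconv₁ : ConvexOn ℝ Set.univ f₁) (hconv₂ : ConvexOn ℝ Set.univ f₂)
    (hlsc₁ : LowerSemicontinuous f₁) (hlsc₂ : LowerSemicontinuous f₂)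
    (hSclosed₁ : IsClosed S₁) (hSconv₁ : Convex ℝ S₁)
    (hSclosed₂ : IsClosed S₂) (hSconv₂ : Convex ℝ S₂)
    (hrep₁ : ∀ x, ((f₁ x : ℝ) : EReal) = ⨆ p ∈ S₁, ((p.1 + inner ℝ p.2 x : ℝ) : EReal))
    (hrep₂ : ∀ x, ((f₂ x : ℝ) : EReal) = ⨆ p ∈ S₂, ((p.1 + inner ℝ p.2 x : ℝ) : EReal))
    (xs : H) (dl du : Set (ℝ × H))
    (hdl : dl = {q : ℝ × H | ∃ p ∈ S₁, q = (p.1 - f₁ xs + inner ℝ p.2 xs, p.2)})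
    (hdu : du = {q : ℝ × H | ∃ p ∈ S₂, q = (-p.1 + f₂ xs - inner ℝ p.2 xs, -p.2)})
    (C : Set (ℝ × H)) (hCne : C.Nonempty) (hC : C ⊆ du)
    (hCgen : du = closure (convexHull ℝ C)) :
    (∀ x, f₁ xs - f₂ xs ≤ f₁ x - f₂ x)
      ↔ ∀ z ∈ C, ∃ ξ : ℝ, 0 ≤ ξ ∧ ∃ p ∈ dl, p + z = ((ξ, (0 : H)) : ℝ × H) :=
  global_optimality_via_codifferential_alternative_general f₁ f₂ S₁ S₂ hSclosed₁ hSconv₁ hrep₁ hrep₂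
    xs dl du hdl hdu C hC hCgen
end

section
/- Let H be a real Hilbert space, f = f₁ − f₂ : H → ℝ a DC function with global codifferential [d̲f(x*), d̄f(x*)] at a point x* ∈ H, and C ⊆ d̄f(x*) a nonempty set with d̄f(x*) = cl conv C. Then f is bounded below on H if and only if there exists ξ ∈ ℝ such that for every z ∈ C the set ([ξ, +∞) × {0}) ∩ (d̲f(x*) + z) is nonempty. -/
/-!
If `f₁ - f₂ ≥ c` and `(b, w) ∈ S₂`, then `c + b + ⟪w, ·⟫` is an affine minorant of `f₁`. Since `S₁`
is closed and convex, a Hahn–Banach separation in `ℝ × H` (with the separating functional written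
through the Riesz representation) shows that `S₁` contains a point of slope `w` and intercept at
least `c + b`; this is the required point of `d̲f(x*) + z` on the axis `ℝ × {0}`.

Conversely, the condition puts every `z ∈ C` in a closed half-space of `ℝ × H` depending on `x`.
The half-space then contains `d̄f(x*) = cl conv C`, and evaluated at the points of `d̄f(x*)`
coming from `S₂` it bounds `f₂ x - f₁ x` by a constant.
-/

open Filter Topology
open scoped RealInnerProductSpace

theorem IsClosed.exists_snd_eq_of_forall_near {E : Type*} [NormedAddCommGroup E]
    {D : Set (ℝ × E)} (hD : IsClosed D) {M : ℝ} (hM : ∀ p ∈ D, p.1 ≤ M) {a : ℝ} {v : E}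
    (hnear : ∀ ε > 0, ∃ p ∈ D, a - ε < p.1 ∧ ‖p.2 - v‖ < ε) :
    ∃ p ∈ D, p.2 = v ∧ a ≤ p.1 := by
  choose! p hpD hp₁ hp₂ using fun n : ℕ => hnear (1 / (n + 1)) Nat.one_div_pos_of_nat
  have hε : Tendsto (fun n : ℕ => 1 / ((n : ℝ) + 1)) atTop (𝓝 0) :=
    tendsto_one_div_add_atTop_nhds_zero_nat
  have hIcc : ∀ n, (p n).1 ∈ Set.Icc (a - 1) M := fun n =>
    ⟨by linarith [hp₁ n, Nat.one_div_le_one_div (α := ℝ) (Nat.zero_le n)], hM _ (hpD n)⟩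
  obtain ⟨γ, -, ψ, hψ, hγ⟩ := isCompact_Icc.tendsto_subseq hIcc
  have hv : Tendsto (fun n => (p n).2) atTop (𝓝 v) :=
    tendsto_iff_norm_sub_tendsto_zero.2 <|
      squeeze_zero (fun _ => norm_nonneg _) (fun n => (hp₂ n).le) hε
  have hlim : Tendsto (p ∘ ψ) atTop (𝓝 (γ, v)) := hγ.prodMk_nhds (hv.comp hψ.tendsto_atTop)
  refine ⟨(γ, v), hD.mem_of_tendsto hlim (.of_forall fun n => hpD (ψ n)), rfl, ?_⟩
  have hlow : Tendsto (fun n => a - 1 / ((ψ n : ℝ) + 1)) atTop (𝓝 a) := by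
    simpa only [sub_zero, Function.comp_def] using
      tendsto_const_nhds.sub (hε.comp hψ.tendsto_atTop)
  exact le_of_tendsto_of_tendsto' hlow hγ fun n => (hp₁ (ψ n)).le

theorem le_add_inner_of_mem_closure_convexHull {E : Type*} [NormedAddCommGroup E]
    [InnerProductSpace ℝ E] {C : Set (ℝ × E)} {k : ℝ} {w : E}
    (hC : ∀ z ∈ C, k ≤ z.1 + ⟪z.2, w⟫) {z : ℝ × E} (hz : z ∈ closure (convexHull ℝ C)) :
    k ≤ z.1 + ⟪z.2, w⟫ := by
  let ℓ : StrongDual ℝ (ℝ × E) := .fst ℝ ℝ E + (innerSL ℝ w).comp (.snd ℝ ℝ E)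
  have hℓ : ∀ z : ℝ × E, ℓ z = z.1 + ⟪z.2, w⟫ := fun z => by simp [ℓ, real_inner_comm]
  have hsub : closure (convexHull ℝ C) ⊆ ℓ ⁻¹' Set.Ici k :=
    closure_minimal (convexHull_min (fun z hz => by simpa [hℓ] using hC z hz)
      ((convex_Ici k).linear_preimage ℓ.toLinearMap)) (isClosed_Ici.preimage ℓ.continuous)
  simpa [hℓ] using hsub hz

section

variable {H : Type*} [NormedAddCommGroup H] [InnerProductSpace ℝ H]

theorem exists_eq_mul_add_inner [CompleteSpace H] (φ : StrongDual ℝ (ℝ × H)) :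
    ∃ (c : ℝ) (y : H), ∀ q, φ q = c * q.1 + ⟪y, q.2⟫ := by
  refine ⟨φ (1, 0), (InnerProductSpace.toDual ℝ H).symm (φ.comp (.inr ℝ ℝ H)), fun q => ?_⟩
  have hq : q = q.1 • ((1 : ℝ), (0 : H)) + ((0 : ℝ), q.2) := by ext <;> simp
  rw [InnerProductSpace.toDual_symm_apply, congrArg φ hq, map_add, map_smul]
  simp [mul_comm]

def IsAffineSupport (S : Set (ℝ × H)) (f : H → ℝ) : Prop :=
  ∀ x, IsLUB ((fun p : ℝ × H => p.1 + ⟪p.2, x⟫) '' S) (f x)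

theorem isAffineSupport_of_coe_eq_biSup {S : Set (ℝ × H)} {f : H → ℝ}
    (h : ∀ x, (f x : EReal) = ⨆ p ∈ S, ((p.1 + ⟪p.2, x⟫ : ℝ) : EReal)) :
    IsAffineSupport S f := fun x =>
  IsLUB.of_image EReal.coe_le_coe_iff (by rw [← Set.image_comp, h]; exact isLUB_biSup)

namespace IsAffineSupport

variable {S : Set (ℝ × H)} {f : H → ℝ}

theorem le (hS : IsAffineSupport S f) {p : ℝ × H} (hp : p ∈ S) (x : H) :
    p.1 + ⟪p.2, x⟫ ≤ f x :=
  (hS x).1 ⟨p, hp, rfl⟩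

theorem le_of_forall_le (hS : IsAffineSupport S f) {x : H} {b : ℝ}
    (h : ∀ p ∈ S, p.1 + ⟪p.2, x⟫ ≤ b) : f x ≤ b :=
  (hS x).2 <| by rintro _ ⟨p, hp, rfl⟩; exact h p hp

/-- A closed half-space `{q | r ≤ c * q.1 + ⟪y, q.2⟫}` with `c ≤ 0` that contains a support set
of `f` contains every affine minorant `(a, v)` of `f`. -/
theorem le_of_forall_le_mul_add_inner (hS : IsAffineSupport S f) {a : ℝ} {v : H}
    (hav : ∀ x, a + ⟪v, x⟫ ≤ f x) {c r : ℝ} {y : H} (hc : c ≤ 0)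
    (hr : ∀ p ∈ S, r ≤ c * p.1 + ⟪y, p.2⟫) : r ≤ c * a + ⟪y, v⟫ := by
  rcases hc.lt_or_eq with hc | rfl
  · have hf : f (c⁻¹ • y) ≤ c⁻¹ * r := hS.le_of_forall_le fun p hp => calc
      p.1 + ⟪p.2, c⁻¹ • y⟫ = c⁻¹ * (c * p.1 + ⟪y, p.2⟫) := by
        rw [real_inner_smul_right, real_inner_comm]; field_simp [hc.ne]
      _ ≤ c⁻¹ * r := mul_le_mul_of_nonpos_left (hr p hp) (inv_nonpos.2 hc.le)
    calc r = c * (c⁻¹ * r) := by field_simp [hc.ne]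
      _ ≤ c * (a + ⟪v, c⁻¹ • y⟫) := mul_le_mul_of_nonpos_left ((hav _).trans hf) hc.le
      _ = c * a + ⟪y, v⟫ := by rw [real_inner_smul_right, real_inner_comm]; field_simp [hc.ne]
  · by_contra! hlt
    simp only [zero_mul, zero_add] at hr hlt
    -- along `x = -t • y` the minorant decreases like `-t ⟪y, v⟫` but `f` like `-t r`
    have ha : a ≤ f 0 := by simpa using hav 0
    set t := (f 0 - a + 1) / (r - ⟪y, v⟫)
    have ht : t * (r - ⟪y, v⟫) = f 0 - a + 1 := div_mul_cancel₀ _ (sub_pos.2 hlt).ne'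
    have ht0 : 0 ≤ t := div_nonneg (by linarith) (sub_pos.2 hlt).le
    have hf : f (-t • y) ≤ f 0 - t * r := hS.le_of_forall_le fun p hp => by
      have hp₁ : p.1 ≤ f 0 := by simpa using hS.le hp 0
      rw [real_inner_smul_right, real_inner_comm, neg_mul]
      nlinarith [hr p hp]
    have := (hav (-t • y)).trans hf
    rw [real_inner_smul_right, real_inner_comm] at this
    nlinarith

theorem exists_near_of_forall_le [CompleteSpace H] (hS : IsAffineSupport S f)
    (hSv : Convex ℝ S) {a : ℝ} {v : H} (hav : ∀ x, a + ⟪v, x⟫ ≤ f x) {ε : ℝ} (hε : 0 < ε) :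
    ∃ p ∈ S, a - ε < p.1 ∧ ‖p.2 - v‖ < ε := by
  by_contra! hfar
  have hdisj : Disjoint (Set.Ioi (a - ε) ×ˢ Metric.ball v ε) S :=
    Set.disjoint_left.2 fun q ⟨hq₁, hq₂⟩ hqS =>
      (hfar q hqS hq₁).not_gt (mem_ball_iff_norm.1 hq₂)
  obtain ⟨φ, r, hlt, hle⟩ := geometric_hahn_banach_open ((convex_Ioi _).prod (convex_ball _ _))
    (isOpen_Ioi.prod Metric.isOpen_ball) hSv hdisj
  obtain ⟨c, y, hφ⟩ := exists_eq_mul_add_inner φ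
  have hray : ∀ t, a - ε < t → c * t + ⟪y, v⟫ < r := fun t ht => by
    simpa [hφ] using hlt (t, v) ⟨ht, Metric.mem_ball_self hε⟩
  rcases le_or_gt c 0 with hc | hc
  · have := hS.le_of_forall_le_mul_add_inner hav hc fun p hp => hφ p ▸ hle p hp
    nlinarith [hray (a - ε / 2) (by linarith)]
  · have := hray (max a ((r - ⟪y, v⟫) / c)) (by linarith [le_max_left a ((r - ⟪y, v⟫) / c)])
    have := (div_le_iff₀' hc).1 (le_max_right a ((r - ⟪y, v⟫) / c))
    linarith

theorem exists_snd_eq_of_forall_le [CompleteSpace H] (hS : IsAffineSupport S f)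
    (hSc : IsClosed S) (hSv : Convex ℝ S) {a : ℝ} {v : H} (hav : ∀ x, a + ⟪v, x⟫ ≤ f x) :
    ∃ p ∈ S, p.2 = v ∧ a ≤ p.1 :=
  hSc.exists_snd_eq_of_forall_near (M := f 0) (fun p hp => by simpa using hS.le hp 0)
    fun _ hε => hS.exists_near_of_forall_le hSv hav hε

end IsAffineSupport

end

theorem boundedBelow_via_codifferential_general
    {H : Type*} [NormedAddCommGroup H] [InnerProductSpace ℝ H] [CompleteSpace H]
    (f₁ f₂ : H → ℝ) (S₁ S₂ : Set (ℝ × H))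
    (hSclosed₁ : IsClosed S₁) (hSconv₁ : Convex ℝ S₁)
    (hrep₁ : ∀ x, ((f₁ x : ℝ) : EReal) = ⨆ p ∈ S₁, ((p.1 + inner ℝ p.2 x : ℝ) : EReal))
    (hrep₂ : ∀ x, ((f₂ x : ℝ) : EReal) = ⨆ p ∈ S₂, ((p.1 + inner ℝ p.2 x : ℝ) : EReal))
    (xs : H) (dl du : Set (ℝ × H))
    (hdl : dl = {q : ℝ × H | ∃ p ∈ S₁, q = (p.1 - f₁ xs + inner ℝ p.2 xs, p.2)})
    (hdu : du = {q : ℝ × H | ∃ p ∈ S₂, q = (-p.1 + f₂ xs - inner ℝ p.2 xs, -p.2)})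
    (C : Set (ℝ × H)) (hC : C ⊆ du)
    (hCgen : du = closure (convexHull ℝ C)) :
    (∃ c : ℝ, ∀ x, c ≤ f₁ x - f₂ x)
      ↔ ∃ ξ : ℝ, ∀ z ∈ C, ∃ p ∈ dl, (p + z).2 = (0 : H) ∧ ξ ≤ (p + z).1 := by
  have hS₁ := isAffineSupport_of_coe_eq_biSup hrep₁
  have hS₂ := isAffineSupport_of_coe_eq_biSup hrep₂
  subst hdl hdu
  constructor
  · rintro ⟨c, hc⟩
    refine ⟨c - f₁ xs + f₂ xs, fun z hz => ?_⟩
    obtain ⟨p₀, hp₀, rfl⟩ := hC hz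
    obtain ⟨p₁, hp₁, hslope, hint⟩ := hS₁.exists_snd_eq_of_forall_le hSclosed₁ hSconv₁
      (a := c + p₀.1) (v := p₀.2) fun x => by linarith [hc x, hS₂.le hp₀ x]
    refine ⟨_, ⟨p₁, hp₁, rfl⟩, by simp [hslope], ?_⟩
    simp only [Prod.fst_add, hslope]
    linarith
  · rintro ⟨ξ, hξ⟩
    refine ⟨ξ + f₁ xs - f₂ xs, fun x => ?_⟩
    have hCle : ∀ z ∈ C, ξ + f₁ xs - f₁ x ≤ z.1 + ⟪z.2, x - xs⟫ := by
      intro z hz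
      obtain ⟨_, ⟨p₁, hp₁, rfl⟩, hslope, hint⟩ := hξ z hz
      rw [eq_neg_of_add_eq_zero_right hslope, inner_neg_left, inner_sub_right]
      simp only [Prod.fst_add] at hint
      linarith [hS₁.le hp₁ x]
    have hf₂ : f₂ x ≤ f₂ xs - (ξ + f₁ xs - f₁ x) := hS₂.le_of_forall_le fun p₀ hp₀ => by
      have := le_add_inner_of_mem_closure_convexHull hCle (hCgen.subset ⟨p₀, hp₀, rfl⟩)
      rw [inner_neg_left, inner_sub_right] at this
      linarith
    linarith

/-- the DC function f = f₁ − f₂ is bounded below iff there exists ξ ∈ ℝ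
such that ([ξ, +∞) × {0}) ∩ (d̲f(x*) + z) ≠ ∅ for every z ∈ C. -/
theorem boundedBelow_via_codifferential
    {H : Type*} [NormedAddCommGroup H] [InnerProductSpace ℝ H] [CompleteSpace H]
    (f₁ f₂ : H → ℝ) (S₁ S₂ : Set (ℝ × H))
    (hconv₁ : ConvexOn ℝ Set.univ f₁) (hconv₂ : ConvexOn ℝ Set.univ f₂)
    (hlsc₁ : LowerSemicontinuous f₁) (hlsc₂ : LowerSemicontinuous f₂)
    (hSclosed₁ : IsClosed S₁) (hSconv₁ : Convex ℝ S₁)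
    (hSclosed₂ : IsClosed S₂) (hSconv₂ : Convex ℝ S₂)
    (hrep₁ : ∀ x, ((f₁ x : ℝ) : EReal) = ⨆ p ∈ S₁, ((p.1 + inner ℝ p.2 x : ℝ) : EReal))
    (hrep₂ : ∀ x, ((f₂ x : ℝ) : EReal) = ⨆ p ∈ S₂, ((p.1 + inner ℝ p.2 x : ℝ) : EReal))
    (xs : H) (dl du : Set (ℝ × H))
    (hdl : dl = {q : ℝ × H | ∃ p ∈ S₁, q = (p.1 - f₁ xs + inner ℝ p.2 xs, p.2)})
    (hdu : du = {q : ℝ × H | ∃ p ∈ S₂, q = (-p.1 + f₂ xs - inner ℝ p.2 xs, -p.2)})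
    (C : Set (ℝ × H)) (hCne : C.Nonempty) (hC : C ⊆ du)
    (hCgen : du = closure (convexHull ℝ C)) :
    (∃ c : ℝ, ∀ x, c ≤ f₁ x - f₂ x)
      ↔ ∃ ξ : ℝ, ∀ z ∈ C, ∃ p ∈ dl, (p + z).2 = (0 : H) ∧ ξ ≤ (p + z).1 :=
  boundedBelow_via_codifferential_general f₁ f₂ S₁ S₂ hSclosed₁ hSconv₁ hrep₁ hrep₂ xs dl du hdl hdu
    C hC hCgen
end
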